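/- Let A be an n×n max-plus matrix with finite spectral radius λ, g a vector, and h a regular vector with h⁻ ⊗ g ≤ 0. Define θ = λ ⊕ max_{1≤k≤n} (1/k)·(h⁻ ⊗ A^k ⊗ g). Then θ is the minimum of x⁻ ⊗ A ⊗ x over all regular vectors x with g ≤ x ≤ h, attained exactly at the vectors x = ((-θ)⊗A)* ⊗ u for regular u with g ≤ u ≤ (h⁻ ⊗ ((-θ)⊗A)*)⁻. -/

import Mathlib

noncomputable section

/-- Max-plus carrier: ℝ ∪ {-∞}. Addition ⊕ is `max`, multiplication ⊗ is `+`
(with ⊥ = -∞ absorbing), zero is ⊥ and unit is `(0 : ℝ)`. -/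
abbrev MP := WithBot ℝ

/-- Multiplicative conjugate: negate a finite value, send -∞ to -∞. -/
def mpInv (a : MP) : MP := a.map (fun t => -t)

/-- Max-plus matrix product. -/
def mpMulM {l m n : ℕ} (A : Fin l → Fin m → MP) (B : Fin m → Fin n → MP) :
    Fin l → Fin n → MP := fun i j => Finset.univ.sup fun k => A i k + B k j

/-- Max-plus matrix-vector product. -/
def mpMulV {m n : ℕ} (A : Fin m → Fin n → MP) (x : Fin n → MP) : Fin m → MP :=
  fun i => Finset.univ.sup fun j => A i j + x j

/-- Max-plus identity matrix. -/
def mpId {n : ℕ} : Fin n → Fin n → MP := fun i j => if i = j then ((0:ℝ) : MP) else ⊥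

/-- Max-plus matrix power. -/
def mpPow {n : ℕ} (A : Fin n → Fin n → MP) : ℕ → (Fin n → Fin n → MP)
  | 0 => mpId
  | k+1 => mpMulM (mpPow A k) A

/-- Max-plus trace. -/
def mpTr {n : ℕ} (A : Fin n → Fin n → MP) : MP := Finset.univ.sup fun i => A i i

/-- Tr(A) = tr A ⊕ tr A² ⊕ ⋯ ⊕ tr Aⁿ. -/
def mpTR {n : ℕ} (A : Fin n → Fin n → MP) : MP :=
  (Finset.Icc 1 n).sup fun m => mpTr (mpPow A m)

/-- Kleene star A* = I ⊕ A ⊕ ⋯ ⊕ A^{n-1}. -/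
def mpStar {n : ℕ} (A : Fin n → Fin n → MP) : Fin n → Fin n → MP :=
  fun i j => (Finset.range n).sup fun k => mpPow A k i j

/-- Max-plus spectral radius λ = max_{1≤m≤n} tr(A^m)^{1/m}. -/
def mpLam {n : ℕ} (A : Fin n → Fin n → MP) : MP :=
  (Finset.Icc 1 n).sup fun m => (mpTr (mpPow A m)).map (fun t => t / (m : ℝ))

/-- The alternating product B^{i₀} A B^{i₁} A ⋯ A B^{iₖ}. -/
def mpChain {n : ℕ} (A B : Fin n → Fin n → MP) : (k : ℕ) → (Fin (k+1) → ℕ) → (Fin n → Fin n → MP)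
  | 0, i => mpPow B (i 0)
  | (k+1), i => mpMulM (mpChain A B k (fun j => i j.castSucc)) (mpMulM A (mpPow B (i (Fin.last (k+1)))))


/-!
For feasible `x` every entry of `x⁻ ⊗ A^k ⊗ x` is at most `k` times `q = x⁻ ⊗ A ⊗ x`; since
`tr(A^k)` and `h⁻ ⊗ A^k ⊗ g` are bounded by such entries, `θ ≤ q`.

With `S = (-θ) ⊗ A`, the inequality `x⁻ ⊗ A ⊗ x ≤ θ` says `S ⊗ x ≤ x`. As `λ ≤ θ`, every cycle
of `S` has nonpositive weight, so removing cycles from walks gives `S^k ≤ S*` for all `k`.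
Hence `S ⊗ x ≤ x` holds exactly for the vectors `x = S* ⊗ u`, and `S* ⊗ u ≤ h` residuates to
`u ≤ (h⁻ ⊗ S*)⁻`.
-/

open Finset

lemma mp_sup_add {ι : Type*} (s : Finset ι) (f : ι → MP) (c : MP) :
    s.sup f + c = s.sup fun i => f i + c :=
  apply_sup_eq_sup_comp_of_linearOrder (· + c) (fun _ _ h => add_le_add_left h c)
    (WithBot.bot_add c)

lemma mp_add_sup {ι : Type*} (s : Finset ι) (f : ι → MP) (c : MP) :
    c + s.sup f = s.sup fun i => c + f i :=
  apply_sup_eq_sup_comp_of_linearOrder (c + ·) (fun _ _ h => add_le_add_right h c)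
    (WithBot.add_bot c)

lemma mp_nsmul_bot {m : ℕ} (hm : 0 < m) : m • (⊥ : MP) = ⊥ := by
  obtain ⟨k, rfl⟩ := Nat.exists_eq_add_of_lt hm
  rw [succ_nsmul, WithBot.add_bot]

lemma map_div_le_of_le_nsmul {a F : MP} {m : ℕ} (hm : 0 < m) (ha : a ≤ m • F) :
    a.map (· / (m : ℝ)) ≤ F := by
  induction F using WithBot.recBotCoe with
  | bot => simp [le_bot_iff.1 (mp_nsmul_bot hm ▸ ha)]
  | coe c =>
    induction a using WithBot.recBotCoe with
    | bot => exact bot_le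
    | coe r =>
      rw [← WithBot.coe_nsmul, WithBot.coe_le_coe, nsmul_eq_mul] at ha
      rw [WithBot.map_coe, WithBot.coe_le_coe, div_le_iff₀ (by exact_mod_cast hm)]
      linarith

lemma coe_le_mpInv_iff {a : MP} (ha : a ≠ ⊥) (u : ℝ) : (u : MP) ≤ mpInv a ↔ a + u ≤ 0 := by
  lift a to ℝ using ha
  rw [mpInv, WithBot.map_coe, ← WithBot.coe_add, ← WithBot.coe_zero, WithBot.coe_le_coe,
    WithBot.coe_le_coe]
  constructor <;> intro <;> linarith

lemma neg_add_add_le_iff (a b c : ℝ) (m : MP) :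
    ((-a : ℝ) : MP) + m + b ≤ c ↔ ((-c : ℝ) : MP) + m + b ≤ a := by
  induction m using WithBot.recBotCoe with
  | bot => simp
  | coe m =>
    simp only [← WithBot.coe_add, WithBot.coe_le_coe]
    constructor <;> intro <;> linarith

lemma neg_add_add_cancel (a : ℝ) (m : MP) : ((-a : ℝ) : MP) + m + a = m := by
  rw [add_right_comm, ← WithBot.coe_add, neg_add_cancel, WithBot.coe_zero, zero_add]

lemma neg_add_add_split (a b c : ℝ) (m m' : MP) :
    ((-a : ℝ) : MP) + (m + m') + c = (((-a : ℝ) : MP) + m + b) + (((-b : ℝ) : MP) + m' + c) := by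
  have hb : (b : MP) + ((-b : ℝ) : MP) = 0 := by
    rw [← WithBot.coe_add, add_neg_cancel, WithBot.coe_zero]
  calc ((-a : ℝ) : MP) + (m + m') + c = ((-a : ℝ) : MP) + m + (b + ((-b : ℝ) : MP)) + m' + c := by
        rw [hb, add_zero, add_assoc _ m]
    _ = _ := by ac_rfl

section Powers

variable {n : ℕ}

lemma mpPow_succ_apply (M : Fin n → Fin n → MP) (k : ℕ) (i j : Fin n) :
    mpPow M (k + 1) i j = univ.sup fun l => mpPow M k i l + M l j :=
  rfl

lemma add_mpPow_le_mpPow_succ (M : Fin n → Fin n → MP) (k : ℕ) (i j l : Fin n) :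
    M i j + mpPow M k j l ≤ mpPow M (k + 1) i l := by
  induction k generalizing l with
  | zero =>
    by_cases hjl : j = l
    · subst hjl
      calc M i j + mpPow M 0 j j = mpId i i + M i j := by simp [mpPow, mpId]
        _ ≤ mpPow M (0 + 1) i j := le_sup (f := fun m => mpId i m + M m j) (mem_univ i)
    · simp [mpPow, mpId, hjl]
  | succ k ih =>
    rw [mpPow_succ_apply, mp_add_sup]
    refine Finset.sup_le fun m _ => ?_
    rw [← add_assoc]
    exact (add_le_add_left (ih m) _).trans
      (le_sup (f := fun m => mpPow M (k + 1) i m + M m l) (mem_univ m))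

lemma mpPow_shift (A : Fin n → Fin n → MP) (c : ℝ) (m : ℕ) :
    mpPow (fun p q => (c : MP) + A p q) m = fun i j => ((m * c : ℝ) : MP) + mpPow A m i j := by
  induction m with
  | zero =>
    funext i j
    by_cases hij : i = j <;> simp [mpPow, mpId, hij]
  | succ k ih =>
    funext i j
    simp only [mpPow, mpMulM, ih, mp_add_sup]
    refine sup_congr rfl fun l _ => ?_
    rw [add_add_add_comm, ← WithBot.coe_add]
    congr 2
    push_cast
    ring

lemma mpTR_shift_nonpos {A : Fin n → Fin n → MP} {θ : ℝ} (hθ : mpLam A ≤ θ) :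
    mpTR (fun p q => ((-θ : ℝ) : MP) + A p q) ≤ 0 := by
  refine Finset.sup_le fun t ht => ?_
  have htpos : (0 : ℝ) < t := by exact_mod_cast (mem_Icc.1 ht).1
  have htr : (mpTr (mpPow A t)).map (· / (t : ℝ)) ≤ θ :=
    (le_sup (f := fun m => (mpTr (mpPow A m)).map (· / (m : ℝ))) ht).trans hθ
  rw [mpTr, mpPow_shift, ← mp_add_sup, ← mpTr]
  induction hM : mpTr (mpPow A t) using WithBot.recBotCoe with
  | bot => simp
  | coe r =>
    rw [hM, WithBot.map_coe, WithBot.coe_le_coe, div_le_iff₀ htpos] at htr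
    rw [← WithBot.coe_add, ← WithBot.coe_zero, WithBot.coe_le_coe]
    nlinarith

end Powers

section Walks

variable {n : ℕ} (M : Fin n → Fin n → MP)

def walkWeight (m : ℕ) (p : ℕ → Fin n) : MP :=
  ∑ t ∈ range m, M (p t) (p (t + 1))

lemma walkWeight_add (a b : ℕ) (p : ℕ → Fin n) :
    walkWeight M (a + b) p = walkWeight M a p + walkWeight M b (fun t => p (a + t)) :=
  sum_range_add _ a b

lemma walkWeight_succ (m : ℕ) (p : ℕ → Fin n) :
    walkWeight M (m + 1) p = walkWeight M m p + M (p m) (p (m + 1)) :=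
  sum_range_succ _ m

lemma walkWeight_congr {m : ℕ} {p q : ℕ → Fin n} (hpq : ∀ t ≤ m, p t = q t) :
    walkWeight M m p = walkWeight M m q :=
  sum_congr rfl fun t ht => by
    rw [hpq t (mem_range.1 ht).le, hpq (t + 1) (mem_range.1 ht)]

lemma walkWeight_le_mpPow (m : ℕ) (p : ℕ → Fin n) : walkWeight M m p ≤ mpPow M m (p 0) (p m) := by
  induction m with
  | zero => simp [walkWeight, mpPow, mpId]
  | succ k ih =>
    rw [walkWeight_succ]
    exact (add_le_add_left ih _).trans
      (le_sup (f := fun l => mpPow M k (p 0) l + M l (p (k + 1))) (mem_univ (p k)))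

lemma exists_walkWeight_eq_mpPow {m : ℕ} {i j : Fin n} (hij : mpPow M m i j ≠ ⊥) :
    ∃ p : ℕ → Fin n, p 0 = i ∧ p m = j ∧ mpPow M m i j = walkWeight M m p := by
  induction m generalizing j with
  | zero =>
    obtain rfl : i = j := by by_contra h; simp [mpPow, mpId, h] at hij
    exact ⟨fun _ => i, rfl, rfl, by simp [walkWeight, mpPow, mpId]⟩
  | succ k ih =>
    obtain ⟨l, -, hl⟩ := exists_mem_eq_sup univ ⟨i, mem_univ i⟩ fun l => mpPow M k i l + M l j
    have hl' : mpPow M (k + 1) i j = mpPow M k i l + M l j := hl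
    obtain ⟨p, hp0, hpk, hp⟩ := ih (j := l) fun hbot => hij (by rw [hl', hbot, WithBot.bot_add])
    refine ⟨fun t => if t ≤ k then p t else j, by simp [hp0], by simp, ?_⟩
    rw [hl', walkWeight_succ, walkWeight_congr M (q := p) fun t ht => if_pos ht, ← hp]
    simp [hpk]

lemma exists_walkWeight_ge_of_cycle {p : ℕ → Fin n} {a d : ℕ} (r : ℕ)
    (hloop : p (a + d) = p a) (hcycle : walkWeight M d (fun t => p (a + t)) ≤ 0) :
    ∃ q : ℕ → Fin n, q 0 = p 0 ∧ q (a + r) = p (a + d + r) ∧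
      walkWeight M (a + d + r) p ≤ walkWeight M (a + r) q := by
  set q : ℕ → Fin n := fun t => if t < a then p t else p (t + d)
  have hprefix : walkWeight M a q = walkWeight M a p := by
    refine walkWeight_congr M fun t ht => ?_
    rcases ht.lt_or_eq with ht | rfl
    · exact if_pos ht
    · simp [q, hloop]
  have hsuffix : (fun t => q (a + t)) = fun t => p (a + d + t) := by
    funext t
    simp only [q, if_neg (Nat.not_lt.2 (Nat.le_add_right a t))]
    congr 1
    omega
  refine ⟨q, ?_, ?_, ?_⟩
  · rcases a.eq_zero_or_pos with rfl | ha
    · simpa [q] using hloop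
    · exact if_pos ha
  · simpa using congrFun hsuffix r
  · rw [walkWeight_add, walkWeight_add, walkWeight_add, hprefix, hsuffix]
    calc _ ≤ walkWeight M a p + 0 + walkWeight M r (fun t => p (a + d + t)) := by gcongr
      _ = _ := by rw [add_zero]

lemma exists_lt_le_apply_eq (p : ℕ → Fin n) : ∃ a b, a < b ∧ b ≤ n ∧ p a = p b := by
  obtain ⟨a, b, hab, hp⟩ :=
    Fintype.exists_ne_map_eq_of_card_lt (fun t : Fin (n + 1) => p t) (by simp)
  rcases lt_or_gt_of_ne (Fin.val_ne_of_ne hab) with h | h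
  · exact ⟨a, b, h, Nat.lt_succ_iff.1 b.isLt, hp⟩
  · exact ⟨b, a, h, Nat.lt_succ_iff.1 a.isLt, hp.symm⟩

theorem mpPow_le_mpStar (hM : mpTR M ≤ 0) (k : ℕ) (i j : Fin n) :
    mpPow M k i j ≤ mpStar M i j := by
  induction k using Nat.strong_induction_on generalizing i j with
  | _ k ih =>
  rcases lt_or_ge k n with hk | hk
  · exact le_sup (f := fun k => mpPow M k i j) (mem_range.2 hk)
  by_cases hbot : mpPow M k i j = ⊥
  · simp [hbot]
  obtain ⟨p, rfl, rfl, hp⟩ := exists_walkWeight_eq_mpPow M hbot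
  obtain ⟨a, b, hab, hbn, hloop⟩ := exists_lt_le_apply_eq p
  obtain ⟨d, rfl⟩ := Nat.exists_eq_add_of_lt hab
  obtain ⟨r, rfl⟩ := Nat.exists_eq_add_of_le (hbn.trans hk)
  have hcycle : walkWeight M (d + 1) (fun t => p (a + t)) ≤ 0 := by
    have hd : d + 1 ∈ Icc 1 n := mem_Icc.2 ⟨by omega, by omega⟩
    calc walkWeight M (d + 1) (fun t => p (a + t)) ≤ mpPow M (d + 1) (p a) (p a) := by
          simpa [← add_assoc, ← hloop] using walkWeight_le_mpPow M (d + 1) fun t => p (a + t)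
      _ ≤ mpTr (mpPow M (d + 1)) := le_sup (f := fun i => mpPow M (d + 1) i i) (mem_univ _)
      _ ≤ 0 := (le_sup (f := fun m => mpTr (mpPow M m)) hd).trans hM
  obtain ⟨q, hq0, hqr, hle⟩ := exists_walkWeight_ge_of_cycle M r hloop.symm hcycle
  rw [hp]
  calc walkWeight M (a + d + 1 + r) p ≤ walkWeight M (a + r) q := hle
    _ ≤ mpPow M (a + r) (q 0) (q (a + r)) := walkWeight_le_mpPow M _ q
    _ ≤ _ := by rw [hq0, hqr]; exact ih _ (by omega) _ _

end Walks

section Star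

variable {n : ℕ} (S : Fin n → Fin n → MP)

lemma zero_le_mpStar_self (j : Fin n) : 0 ≤ mpStar S j j := by
  have h0 : mpPow S 0 j j = 0 := by simp [mpPow, mpId]
  exact h0 ▸ le_sup (f := fun k => mpPow S k j j) (mem_range.2 j.pos)

lemma le_mpMulV_mpStar (v : Fin n → MP) (i : Fin n) : v i ≤ mpMulV (mpStar S) v i :=
  calc v i = 0 + v i := (zero_add _).symm
    _ ≤ mpStar S i i + v i := by gcongr; exact zero_le_mpStar_self S i
    _ ≤ mpMulV (mpStar S) v i := le_sup (f := fun j => mpStar S i j + v j) (mem_univ i)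

lemma mpPow_add_le_of_add_le {v : Fin n → MP} (hv : ∀ i j, S i j + v j ≤ v i) (k : ℕ)
    (i j : Fin n) : mpPow S k i j + v j ≤ v i := by
  induction k generalizing j with
  | zero => by_cases hij : i = j <;> simp [mpPow, mpId, hij]
  | succ k ih =>
    rw [mpPow_succ_apply, mp_sup_add]
    refine Finset.sup_le fun l _ => ?_
    calc mpPow S k i l + S l j + v j = mpPow S k i l + (S l j + v j) := add_assoc _ _ _
      _ ≤ mpPow S k i l + v l := by gcongr; exact hv l j
      _ ≤ v i := ih l

lemma mpMulV_mpStar_eq_of_add_le {v : Fin n → MP} (hv : ∀ i j, S i j + v j ≤ v i) :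
    mpMulV (mpStar S) v = v := by
  funext i
  refine le_antisymm (Finset.sup_le fun j _ => ?_) (le_mpMulV_mpStar S v i)
  show ((range n).sup fun k => mpPow S k i j) + v j ≤ v i
  rw [mp_sup_add]
  exact Finset.sup_le fun k _ => mpPow_add_le_of_add_le S hv k i j

variable {S}

lemma add_mpStar_le (hS : mpTR S ≤ 0) (i j l : Fin n) : S i j + mpStar S j l ≤ mpStar S i l := by
  rw [mpStar, mp_add_sup]
  exact Finset.sup_le fun k _ =>
    (add_mpPow_le_mpPow_succ S k i j l).trans (mpPow_le_mpStar S hS (k + 1) i l)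

lemma add_mpMulV_mpStar_le (hS : mpTR S ≤ 0) (v : Fin n → MP) (i j : Fin n) :
    S i j + mpMulV (mpStar S) v j ≤ mpMulV (mpStar S) v i := by
  rw [mpMulV, mp_add_sup]
  refine Finset.sup_le fun l _ => ?_
  calc S i j + (mpStar S j l + v l) = S i j + mpStar S j l + v l := (add_assoc _ _ _).symm
    _ ≤ mpStar S i l + v l := by gcongr; exact add_mpStar_le hS i j l
    _ ≤ mpMulV (mpStar S) v i := le_sup (f := fun l => mpStar S i l + v l) (mem_univ l)

end Star

lemma mpMulV_le_iff_le_mpInv {n : ℕ} {P : Fin n → Fin n → MP} (hP : ∀ j, P j j ≠ ⊥)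
    (u h : Fin n → ℝ) :
    (∀ i, mpMulV P (fun j => (u j : MP)) i ≤ h i) ↔
      ∀ j, (u j : MP) ≤ mpInv (univ.sup fun i => ((-(h i) : ℝ) : MP) + P i j) := by
  have hne (j : Fin n) : (univ.sup fun i => ((-(h i) : ℝ) : MP) + P i j) ≠ ⊥ :=
    ne_bot_of_le_ne_bot (WithBot.add_ne_bot.2 ⟨WithBot.coe_ne_bot, hP j⟩)
      (le_sup (f := fun i => ((-(h i) : ℝ) : MP) + P i j) (mem_univ j))
  simp only [coe_le_mpInv_iff (hne _), mp_sup_add, mpMulV, Finset.sup_le_iff, mem_univ,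
    true_implies]
  rw [forall_comm]
  refine forall₂_congr fun j i => ?_
  simpa using (neg_add_add_le_iff (h i) (u j) 0 (P i j)).symm

section Objective

variable {n : ℕ}

-- `x⁻ ⊗ M ⊗ x`
def mpQuad (M : Fin n → Fin n → MP) (x : Fin n → ℝ) : MP :=
  univ.sup fun i => univ.sup fun j => ((-(x i) : ℝ) : MP) + M i j + (x j : MP)

lemma le_mpQuad (M : Fin n → Fin n → MP) (x : Fin n → ℝ) (i j : Fin n) :
    ((-(x i) : ℝ) : MP) + M i j + x j ≤ mpQuad M x :=
  (le_sup (f := fun j => ((-(x i) : ℝ) : MP) + M i j + (x j : MP)) (mem_univ j)).trans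
    (le_sup (f := fun i => univ.sup fun j => ((-(x i) : ℝ) : MP) + M i j + (x j : MP))
      (mem_univ i))

lemma mpQuad_le_coe_iff (A : Fin n → Fin n → MP) (x : Fin n → ℝ) (θ : ℝ) :
    mpQuad A x ≤ θ ↔ ∀ i j, ((-θ : ℝ) : MP) + A i j + x j ≤ x i := by
  simp only [mpQuad, Finset.sup_le_iff, mem_univ, true_implies]
  exact forall₂_congr fun i j => neg_add_add_le_iff _ _ _ _

lemma neg_add_mpPow_add_le_nsmul (A : Fin n → Fin n → MP) (x : Fin n → ℝ) (m : ℕ) (i j : Fin n) :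
    ((-(x i) : ℝ) : MP) + mpPow A m i j + x j ≤ m • mpQuad A x := by
  induction m generalizing j with
  | zero =>
    by_cases hij : i = j
    · subst hij
      simp [mpPow, mpId, ← WithBot.coe_add]
    · simp [mpPow, mpId, hij]
  | succ m ih =>
    rw [mpPow_succ_apply, mp_add_sup, mp_sup_add]
    refine Finset.sup_le fun l _ => ?_
    rw [neg_add_add_split (x i) (x l) (x j), succ_nsmul]
    exact add_le_add (ih l) (le_mpQuad A x l j)

lemma mpQuad_mpPow_le (A : Fin n → Fin n → MP) (x : Fin n → ℝ) (m : ℕ) :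
    mpQuad (mpPow A m) x ≤ m • mpQuad A x :=
  Finset.sup_le fun i _ => Finset.sup_le fun j _ => neg_add_mpPow_add_le_nsmul A x m i j

lemma mpTr_le_mpQuad (M : Fin n → Fin n → MP) (x : Fin n → ℝ) : mpTr M ≤ mpQuad M x :=
  Finset.sup_le fun i _ => by simpa only [neg_add_add_cancel] using le_mpQuad M x i i

lemma mpLam_le_mpQuad (A : Fin n → Fin n → MP) (x : Fin n → ℝ) : mpLam A ≤ mpQuad A x :=
  Finset.sup_le fun m hm => map_div_le_of_le_nsmul (mem_Icc.1 hm).1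
    ((mpTr_le_mpQuad _ x).trans (mpQuad_mpPow_le A x m))

lemma neg_add_mpMulV_le_mpQuad {g : Fin n → MP} {x h : Fin n → ℝ}
    (hx : ∀ i, g i ≤ (x i : MP) ∧ (x i : MP) ≤ (h i : MP)) (M : Fin n → Fin n → MP) (i : Fin n) :
    ((-(h i) : ℝ) : MP) + mpMulV M g i ≤ mpQuad M x := by
  rw [mpMulV, mp_add_sup]
  refine Finset.sup_le fun j _ => ?_
  have hxh : ((-(h i) : ℝ) : MP) ≤ ((-(x i) : ℝ) : MP) :=
    WithBot.coe_le_coe.2 (neg_le_neg (WithBot.coe_le_coe.1 (hx i).2))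
  calc ((-(h i) : ℝ) : MP) + (M i j + g j) ≤ ((-(x i) : ℝ) : MP) + (M i j + x j) := by
        gcongr; exact (hx j).1
    _ ≤ mpQuad M x := (add_assoc _ _ _).symm.le.trans (le_mpQuad M x i j)

lemma coe_le_mpQuad {A : Fin n → Fin n → MP} {g : Fin n → MP} {h : Fin n → ℝ} {θ : ℝ}
    (hθ : (θ : MP) = max (mpLam A)
        ((Icc 1 n).sup fun k =>
          (univ.sup fun i => ((-(h i) : ℝ) : MP) + mpMulV (mpPow A k) g i).map (· / (k : ℝ))))
    (x : Fin n → ℝ) (hx : ∀ i, g i ≤ (x i : MP) ∧ (x i : MP) ≤ (h i : MP)) :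
    (θ : MP) ≤ mpQuad A x := by
  rw [hθ]
  refine max_le (mpLam_le_mpQuad A x) (Finset.sup_le fun k hk => ?_)
  exact map_div_le_of_le_nsmul (mem_Icc.1 hk).1 (Finset.sup_le fun i _ =>
    (neg_add_mpMulV_le_mpQuad hx _ i).trans (mpQuad_mpPow_le A x k))

end Objective

theorem maxplus_opt_box_general {n : ℕ} (A : Fin n → Fin n → MP) (g : Fin n → MP)
    (h : Fin n → ℝ)
    (θ : ℝ)
    (hθ : (θ : MP) = max (mpLam A)
        ((Finset.Icc 1 n).sup fun k =>
          (Finset.univ.sup fun i =>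
            ((-(h i) : ℝ) : MP) + mpMulV (mpPow A k) g i).map (fun t => t / (k : ℝ)))) :
    (∀ x : Fin n → ℝ,
      (∀ i, g i ≤ (x i : MP) ∧ (x i : MP) ≤ (h i : MP)) →
      (θ : MP) ≤ Finset.univ.sup fun i => Finset.univ.sup fun j =>
        ((-(x i) : ℝ) : MP) + A i j + (x j : MP)) ∧
    (∀ x : Fin n → ℝ,
      ((∀ i, g i ≤ (x i : MP) ∧ (x i : MP) ≤ (h i : MP)) ∧
        (Finset.univ.sup fun i => Finset.univ.sup fun j =>
          ((-(x i) : ℝ) : MP) + A i j + (x j : MP)) = (θ : MP)) ↔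
      (∃ u : Fin n → ℝ,
        (∀ j, g j ≤ (u j : MP)) ∧
        (∀ j, (u j : MP) ≤ mpInv (Finset.univ.sup fun i =>
          ((-(h i) : ℝ) : MP) + mpStar (fun p q => ((-θ : ℝ) : MP) + A p q) i j)) ∧
        ∀ i, (x i : MP) =
          mpMulV (mpStar (fun p q => ((-θ : ℝ) : MP) + A p q))
            (fun j => (u j : MP)) i)) := by
  set S : Fin n → Fin n → MP := fun p q => ((-θ : ℝ) : MP) + A p q
  have hS : mpTR S ≤ 0 := mpTR_shift_nonpos (hθ ▸ le_max_left _ _)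
  have hS_diag (j : Fin n) : mpStar S j j ≠ ⊥ :=
    ne_bot_of_le_ne_bot WithBot.coe_ne_bot (zero_le_mpStar_self S j)
  refine ⟨coe_le_mpQuad hθ, fun x => ⟨?_, ?_⟩⟩
  · rintro ⟨hx, hxθ⟩
    have hfix : mpMulV (mpStar S) (fun j => (x j : MP)) = fun j => (x j : MP) :=
      mpMulV_mpStar_eq_of_add_le S ((mpQuad_le_coe_iff A x θ).1 hxθ.le)
    refine ⟨x, fun j => (hx j).1, (mpMulV_le_iff_le_mpInv hS_diag x h).1 fun i => ?_,
      fun i => (congrFun hfix i).symm⟩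
    rw [hfix]
    exact (hx i).2
  · rintro ⟨u, hgu, huh, hxu⟩
    have hx (i : Fin n) : g i ≤ x i ∧ (x i : MP) ≤ h i :=
      ⟨(hgu i).trans (hxu i ▸ le_mpMulV_mpStar S (fun j => (u j : MP)) i),
        hxu i ▸ (mpMulV_le_iff_le_mpInv hS_diag u h).2 huh i⟩
    refine ⟨hx, le_antisymm ((mpQuad_le_coe_iff A x θ).2 fun i j => ?_) (coe_le_mpQuad hθ x hx)⟩
    rw [hxu i, hxu j]
    exact add_mpMulV_mpStar_le hS _ i j

/-- Solution of minimize x⁻ A x subject to g ≤ x ≤ h: the minimum equals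
θ = λ ⊕ ⨁_{k=1}^{n} (h⁻ A^k g)^{1/k}, attained exactly at x = (θ⁻¹A)* u for
regular u with g ≤ u ≤ (h⁻ (θ⁻¹A)*)⁻. -/
theorem maxplus_opt_box {n : ℕ} (A : Fin n → Fin n → MP) (g : Fin n → MP)
    (h : Fin n → ℝ) (hlam : mpLam A ≠ ⊥)
    (hgh : (Finset.univ.sup fun i => ((-(h i) : ℝ) : MP) + g i) ≤ ((0:ℝ) : MP))
    (θ : ℝ)
    (hθ : (θ : MP) = max (mpLam A)
        ((Finset.Icc 1 n).sup fun k =>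
          (Finset.univ.sup fun i =>
            ((-(h i) : ℝ) : MP) + mpMulV (mpPow A k) g i).map (fun t => t / (k : ℝ)))) :
    (∀ x : Fin n → ℝ,
      (∀ i, g i ≤ (x i : MP) ∧ (x i : MP) ≤ (h i : MP)) →
      (θ : MP) ≤ Finset.univ.sup fun i => Finset.univ.sup fun j =>
        ((-(x i) : ℝ) : MP) + A i j + (x j : MP)) ∧
    (∀ x : Fin n → ℝ,
      ((∀ i, g i ≤ (x i : MP) ∧ (x i : MP) ≤ (h i : MP)) ∧
        (Finset.univ.sup fun i => Finset.univ.sup fun j =>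
          ((-(x i) : ℝ) : MP) + A i j + (x j : MP)) = (θ : MP)) ↔
      (∃ u : Fin n → ℝ,
        (∀ j, g j ≤ (u j : MP)) ∧
        (∀ j, (u j : MP) ≤ mpInv (Finset.univ.sup fun i =>
          ((-(h i) : ℝ) : MP) + mpStar (fun p q => ((-θ : ℝ) : MP) + A p q) i j)) ∧
        ∀ i, (x i : MP) =
          mpMulV (mpStar (fun p q => ((-θ : ℝ) : MP) + A p q))
            (fun j => (u j : MP)) i)) :=
  maxplus_opt_box_general A g h θ hθ
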